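/- arXiv:1903.06459 — 5 statements merged into one kernel-verified Lean document; each statement's English description precedes it below -/
import Mathlib

section
/- For every normed space X over 𝕜, the range of the canonical embedding j_{X*} : X* → X*** and the annihilator (j_X(X))⁰ = {ξ ∈ X*** : ξ ∘ j_X = 0} of the image of j_X are closed complementary subspaces of X***; that is, X*** is the internal topological direct sum of the closed subspace j_{X*}(X*) and the closed subspace (j_X(X))⁰. -/
/-!
The dual map `(j_X)* : X*** → X*` is a left inverse of `j_{X*}`, because
`(j_X)* (j_{X*} f) x = (j_X x) f = f x`. Hence `j_{X*} ∘ (j_X)*` is a continuous projection of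
`X***` whose range is `j_{X*}(X*)` and whose kernel is `ker (j_X)* = (j_X(X))⁰`; the range and
kernel of a continuous projection are closed topological complements.
-/

open NormedSpace

/-- The topological dual `E →L[𝕜] 𝕜` (the old `NormedSpace.Dual`, removed from Mathlib). -/
abbrev NormedSpace.Dual (𝕜 : Type*) [NontriviallyNormedField 𝕜] (E : Type*) [SeminormedAddCommGroup E]
    [NormedSpace 𝕜 E] : Type _ := E →L[𝕜] 𝕜

/-- The dual map `f ↦ f*`, where `f*(g) = g ∘ f`. -/
noncomputable def dualMapCLM {𝕜 : Type*} [RCLike 𝕜] {X Y : Type*} [SeminormedAddCommGroup X]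
    [NormedSpace 𝕜 X] [SeminormedAddCommGroup Y] [NormedSpace 𝕜 Y] (f : X →L[𝕜] Y) :
    Dual 𝕜 Y →L[𝕜] Dual 𝕜 X :=
  (ContinuousLinearMap.compL 𝕜 X Y 𝕜).flip f

/-- The annihilator of the image of `j_X : X → X**` inside `X***`:
`{ξ : X*** | ξ ∘ j_X = 0}`, i.e. the kernel of the dual map `(j_X)* : X*** → X*`. -/
noncomputable def annOfImage (𝕜 : Type*) [RCLike 𝕜] (X : Type*) [NormedAddCommGroup X]
    [NormedSpace 𝕜 X] : Submodule 𝕜 (Dual 𝕜 (Dual 𝕜 (Dual 𝕜 X))) :=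
  LinearMap.ker (dualMapCLM (inclusionInDoubleDual 𝕜 X)).toLinearMap

theorem dualMapCLM_apply {𝕜 : Type*} [RCLike 𝕜] {X Y : Type*} [SeminormedAddCommGroup X]
    [NormedSpace 𝕜 X] [SeminormedAddCommGroup Y] [NormedSpace 𝕜 Y] (f : X →L[𝕜] Y)
    (g : Dual 𝕜 Y) : dualMapCLM f g = g.comp f :=
  rfl

theorem leftInverse_dualMapCLM_inclusionInDoubleDual (𝕜 : Type*) [RCLike 𝕜] (X : Type*)
    [SeminormedAddCommGroup X] [NormedSpace 𝕜 X] :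
    Function.LeftInverse (dualMapCLM (inclusionInDoubleDual 𝕜 X))
      (inclusionInDoubleDual 𝕜 (Dual 𝕜 X)) :=
  fun _ ↦ rfl

theorem mem_annOfImage_iff (𝕜 : Type*) [RCLike 𝕜] (X : Type*) [NormedAddCommGroup X]
    [NormedSpace 𝕜 X] (ξ : Dual 𝕜 (Dual 𝕜 (Dual 𝕜 X))) :
    ξ ∈ annOfImage 𝕜 X ↔ ∀ x : X, ξ (inclusionInDoubleDual 𝕜 X x) = 0 := by
  rw [annOfImage, LinearMap.mem_ker, ContinuousLinearMap.coe_coe, dualMapCLM_apply,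
    ContinuousLinearMap.ext_iff]
  rfl

theorem isTopCompl_range_inclusionInDoubleDual_annOfImage (𝕜 : Type*) [RCLike 𝕜] (X : Type*)
    [NormedAddCommGroup X] [NormedSpace 𝕜 X] :
    (LinearMap.range (inclusionInDoubleDual 𝕜 (Dual 𝕜 X)).toLinearMap).IsTopCompl
      (annOfImage 𝕜 X) :=
  ContinuousLinearMap.isTopCompl_range_ker_of_leftInverse _ _
    (leftInverse_dualMapCLM_inclusionInDoubleDual 𝕜 X)

set_option synthInstance.maxHeartbeats 200000 in
/-- For every normed space `X` over `𝕜 ∈ {ℝ, ℂ}`, the range of the canonical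
embedding `j_{X*} : X* → X***` and the annihilator `(j_X(X))⁰ = {ξ : X*** | ξ ∘ j_X = 0}` are
closed complementary subspaces of `X***`. -/
theorem range_inclusion_isCompl_annihilator (𝕜 : Type*) [RCLike 𝕜]
    (X : Type*) [NormedAddCommGroup X] [NormedSpace 𝕜 X] :
    (∀ ξ : Dual 𝕜 (Dual 𝕜 (Dual 𝕜 X)),
      ξ ∈ annOfImage 𝕜 X ↔ ∀ x : X, ξ (inclusionInDoubleDual 𝕜 X x) = 0) ∧
    IsClosed ((LinearMap.range (inclusionInDoubleDual 𝕜 (Dual 𝕜 X)).toLinearMap :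
      Submodule 𝕜 (Dual 𝕜 (Dual 𝕜 (Dual 𝕜 X)))) : Set (Dual 𝕜 (Dual 𝕜 (Dual 𝕜 X)))) ∧
    IsClosed ((annOfImage 𝕜 X : Submodule 𝕜 (Dual 𝕜 (Dual 𝕜 (Dual 𝕜 X)))) :
      Set (Dual 𝕜 (Dual 𝕜 (Dual 𝕜 X)))) ∧
    IsCompl (LinearMap.range (inclusionInDoubleDual 𝕜 (Dual 𝕜 X)).toLinearMap) (annOfImage 𝕜 X) := by
  have h := isTopCompl_range_inclusionInDoubleDual_annOfImage 𝕜 X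
  exact ⟨mem_annOfImage_iff 𝕜 X, h.symm.isClosed', h.isClosed', h.isCompl⟩
end

section
/- Let X be a normed space over 𝕜 such that there exist a normed space Y over 𝕜 and a continuous linear equivalence between X and Y*. Then X is complete (a Banach space), there exists a continuous linear map r : X** → X with r ∘ j_X = id_X, and the range of j_X is a closed subspace of X** admitting a closed direct complement (i.e., it is complemented in X**). -/
open NormedSpace

/-!
Every continuous linear map `f : X → Y*` factors through the canonical embedding as
`f = f̃ ∘ j_X`. For an isomorphism `e : X ≃ Y*` the map `e⁻¹ ∘ ẽ` is therefore a continuous left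
inverse of `j_X`, and a continuous linear map with a continuous left inverse has closed range with
a closed complement (the kernel of the left inverse). Completeness is inherited from `Y*`.
-/

namespace NormedSpace

variable {𝕜 X Y : Type*} [RCLike 𝕜] [NormedAddCommGroup X] [NormedSpace 𝕜 X]
  [NormedAddCommGroup Y] [NormedSpace 𝕜 Y]

/-- The map `f̃ Φ = Φ ∘ fᵀ`, where `fᵀ = f.flip : Y → X*` is the transpose of `f`. -/
noncomputable def extendToDoubleDual (f : X →L[𝕜] StrongDual 𝕜 Y) :
    StrongDual 𝕜 (StrongDual 𝕜 X) →L[𝕜] StrongDual 𝕜 Y :=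
  (ContinuousLinearMap.compL 𝕜 Y (StrongDual 𝕜 X) 𝕜).flip f.flip

theorem extendToDoubleDual_comp_inclusionInDoubleDual (f : X →L[𝕜] StrongDual 𝕜 Y) :
    extendToDoubleDual f ∘L inclusionInDoubleDual 𝕜 X = f := by
  ext x y
  rfl

theorem hasLeftInverse_inclusionInDoubleDual_of_equiv_dual (e : X ≃L[𝕜] StrongDual 𝕜 Y) :
    (inclusionInDoubleDual 𝕜 X).HasLeftInverse :=
  ContinuousLinearMap.HasLeftInverse.of_comp
    (g := extendToDoubleDual (e : X →L[𝕜] StrongDual 𝕜 Y)) <| by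
    rw [extendToDoubleDual_comp_inclusionInDoubleDual]
    exact e.hasLeftInverse

end NormedSpace

/-- If a normed space `X` over `𝕜 ∈ {ℝ, ℂ}` is continuously linearly
equivalent to the dual of some normed space `Y`, then `X` is a Banach space, the canonical
embedding `j_X : X → X**` admits a continuous linear left inverse (retraction) `r : X** → X`,
and the range of `j_X` is a closed subspace of `X**` admitting a closed direct complement. -/
theorem complete_retract_complemented_of_equiv_dual {𝕜 : Type*} [RCLike 𝕜]
    {X Y : Type*} [NormedAddCommGroup X] [NormedSpace 𝕜 X]
    [NormedAddCommGroup Y] [NormedSpace 𝕜 Y]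
    (e : X ≃L[𝕜] StrongDual 𝕜 Y) :
    CompleteSpace X ∧
    (∃ r : StrongDual 𝕜 (StrongDual 𝕜 X) →L[𝕜] X,
      r.comp (inclusionInDoubleDual 𝕜 X) = ContinuousLinearMap.id 𝕜 X) ∧
    IsClosed (Set.range ⇑(inclusionInDoubleDual 𝕜 X)) ∧
    (∃ W : Submodule 𝕜 (StrongDual 𝕜 (StrongDual 𝕜 X)),
      IsClosed (W : Set (StrongDual 𝕜 (StrongDual 𝕜 X))) ∧
      IsCompl (LinearMap.range (inclusionInDoubleDual 𝕜 X : X →ₗ[𝕜] StrongDual 𝕜 (StrongDual 𝕜 X))) W) := by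
  have hj := hasLeftInverse_inclusionInDoubleDual_of_equiv_dual e
  -- With `F` given, its `AddCommGroup` instance is synthesized; unification alone does not find
  -- it from the `AddCommMonoid` instance of `StrongDual` appearing in `hj`.
  have hclosed := ContinuousLinearMap.HasLeftInverse.isClosed_range
    (F := StrongDual 𝕜 (StrongDual 𝕜 X)) hj
  have hcompl := ContinuousLinearMap.HasLeftInverse.closedComplemented_range
    (F := StrongDual 𝕜 (StrongDual 𝕜 X)) hj
  have hcomplete : CompleteSpace X :=
    (e.isUniformEmbedding.isUniformInducing.completeSpace_congr e.surjective).2 inferInstance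
  exact ⟨hcomplete, ⟨hj.leftInverse, ContinuousLinearMap.ext hj.leftInverse_leftInverse⟩, hclosed,
    hcompl.exists_isClosed_isCompl⟩
end

section
/- There exists a Banach space X over ℝ such that for every normed space Y over ℝ there is no continuous linear equivalence between X and the dual space Y*; that is, X is not isomorphic (as a topological vector space, via a continuous linear isomorphism) to the dual of any normed space. -/
/-- A witness for Statement 10: a Banach space over `ℝ` that is not continuously linearly
isomorphic to the dual of any normed space over `ℝ`. -/
structure BanachNotADualWitness : Type 1 where
  /-- The underlying space. -/
  X : Type
  [grp : NormedAddCommGroup X]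
  [mod : NormedSpace ℝ X]
  /-- `X` is a Banach space. -/
  complete : CompleteSpace X
  /-- `X` is not isomorphic (via a continuous linear isomorphism) to the dual of any
  normed space `Y` over `ℝ`. -/
  not_dual : ∀ (Y : Type) [NormedAddCommGroup Y] [NormedSpace ℝ Y],
    IsEmpty (X ≃L[ℝ] StrongDual ℝ Y)

/-!
The witness is `c₀ = C₀(ℕ, ℝ)`. Every functional `f` on `c₀` satisfies `∑ₖ |f eₖ| ≤ ‖f‖`, so each
`A ⊆ ℕ` gives a functional `f ↦ ∑_{k ∈ A} f eₖ` of norm `≤ 1` on `c₀*`. If `T : c₀ ≃ Y*`, composing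
it with `y ↦ (x ↦ T x y)` gives an element of `Y*`, hence an element `x_A = T⁻¹(…)` of `c₀`. The
coordinates `μₙ A = x_A n` are uniformly bounded, finitely additive in `A`, equal to `1` on finite
sets containing `n`, and tend to `0` as `n → ∞` for every `A`. A sliding hump (Phillips' lemma)
rules this out: choose `n₀ < n₁ < …` and nested infinite sets `Rⱼ` such that `μ_{nⱼ}` is at most
`1/4` in absolute value on all subsets of `R_{j+1}`; then `μ_{nⱼ}({nᵢ}) ≥ 3/4` for all `j`.
-/

open Filter Function Set Topology MeasureTheory ZeroAtInfty

noncomputable section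

theorem Set.Infinite.exists_pairwise_disjoint_infinite_subsets {α : Type*} {R : Set α}
    (hR : R.Infinite) :
    ∃ F : ℕ → Set α, (∀ j, F j ⊆ R ∧ (F j).Infinite) ∧ Pairwise (Disjoint on F) := by
  set e := hR.natEmbedding
  refine ⟨fun j => range fun i => (e (Nat.pair j i) : α), fun j => ⟨?_, ?_⟩, ?_⟩
  · rintro _ ⟨i, rfl⟩
    exact (e _).2
  · exact infinite_range_of_injective fun i i' h =>
      (Nat.pair_eq_pair.1 (e.injective (Subtype.val_injective h))).2
  · intro j j' hj
    refine disjoint_left.2 ?_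
    rintro _ ⟨i, rfl⟩ ⟨i', h⟩
    exact hj (Nat.pair_eq_pair.1 (e.injective (Subtype.val_injective h))).1.symm

namespace MeasureTheory

variable {α : Type*}

theorem isSetRing_univ : IsSetRing (univ : Set (Set α)) :=
  ⟨trivial, fun _ _ _ _ => trivial, fun _ _ _ _ => trivial⟩

namespace AddContent

variable {M : ℝ} (ν : AddContent ℝ (univ : Set (Set α)))

theorem sum_abs_le_of_pairwiseDisjoint (hν : ∀ A, |ν A| ≤ M) {ι : Type*} (I : Finset ι)
    {s : ι → Set α} (hs : (I : Set ι).PairwiseDisjoint s) :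
    ∑ i ∈ I, |ν (s i)| ≤ 2 * M := by
  classical
  have hunion : ∀ J ⊆ I, ν (⋃ i ∈ J, s i) = ∑ i ∈ J, ν (s i) := fun J hJ =>
    addContent_biUnion (fun _ _ => trivial) (hs.subset (by simpa using hJ)) trivial
  set P := I.filter fun i => 0 ≤ ν (s i)
  set N := I.filter fun i => ¬ 0 ≤ ν (s i)
  calc ∑ i ∈ I, |ν (s i)| = ∑ i ∈ P, ν (s i) - ∑ i ∈ N, ν (s i) := by
        rw [← Finset.sum_filter_add_sum_filter_not I (fun i => 0 ≤ ν (s i)), sub_eq_add_neg,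
          ← Finset.sum_neg_distrib]
        congr 1 <;> refine Finset.sum_congr rfl fun i hi => ?_
        · exact abs_of_nonneg (Finset.mem_filter.1 hi).2
        · exact abs_of_neg (not_le.1 (Finset.mem_filter.1 hi).2)
    _ = ν (⋃ i ∈ P, s i) - ν (⋃ i ∈ N, s i) := by
        rw [hunion P (Finset.filter_subset _ _), hunion N (Finset.filter_subset _ _)]
    _ ≤ 2 * M := by
        linarith [(abs_le.1 (hν (⋃ i ∈ P, s i))).2, (abs_le.1 (hν (⋃ i ∈ N, s i))).1]

theorem exists_infinite_subset_forall_abs_le (hν : ∀ A, |ν A| ≤ M) {R : Set α}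
    (hR : R.Infinite) {ε : ℝ} (hε : 0 < ε) :
    ∃ R' ⊆ R, R'.Infinite ∧ ∀ S ⊆ R', |ν S| ≤ ε := by
  -- Otherwise each of `p + 1` disjoint infinite pieces of `R` contains a set `S j` with
  -- `ε < |ν (S j)|`, and for large `p` these exceed the bound `2 * M` on their total.
  by_contra! hbad
  obtain ⟨F, hF, hdisj⟩ := hR.exists_pairwise_disjoint_infinite_subsets
  choose S hSF hS using fun j => hbad (F j) (hF j).1 (hF j).2
  obtain ⟨p, hp⟩ := exists_nat_gt (2 * M / ε)
  have hsum : ∑ j ∈ Finset.range (p + 1), ε < ∑ j ∈ Finset.range (p + 1), |ν (S j)| :=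
    Finset.sum_lt_sum_of_nonempty Finset.nonempty_range_add_one fun j _ => hS j
  have hle := sum_abs_le_of_pairwiseDisjoint ν hν (Finset.range (p + 1))
    (s := S) fun i _ j _ hij => (hdisj hij).mono (hSF i) (hSF j)
  rw [div_lt_iff₀ hε] at hp
  simp only [Finset.sum_const, Finset.card_range, nsmul_eq_mul] at hsum
  push_cast at hsum
  linarith

theorem exists_seq_forall_abs_le (μ : ℕ → AddContent ℝ (univ : Set (Set ℕ)))
    (hμ : ∀ n A, |μ n A| ≤ M) {ε : ℝ} (hε : 0 < ε) :
    ∃ (m : ℕ → ℕ) (R : ℕ → Set ℕ), (∀ j, m j ∈ R j) ∧ (∀ j, R (j + 1) ⊆ R j \ Iic (m j)) ∧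
      ∀ j, ∀ S ⊆ R (j + 1), |μ (m j) S| ≤ ε := by
  have step (R : {R : Set ℕ // R.Infinite}) : ∃ m ∈ R.1, ∃ R' : {R' : Set ℕ // R'.Infinite},
      R'.1 ⊆ R.1 \ Iic m ∧ ∀ S ⊆ R'.1, |μ m S| ≤ ε := by
    obtain ⟨m, hm⟩ := R.2.nonempty
    obtain ⟨R', hR'R, hR', hsmall⟩ :=
      exists_infinite_subset_forall_abs_le (μ m) (hμ m) (R.2.sdiff (finite_Iic m)) hε
    exact ⟨m, hm, ⟨R', hR'⟩, hR'R, hsmall⟩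
  choose m hm next hnext hsmall using step
  set R : ℕ → {R : Set ℕ // R.Infinite} := fun j => next^[j] ⟨univ, infinite_univ⟩
  have hR (j : ℕ) : R (j + 1) = next (R j) := iterate_succ_apply' ..
  refine ⟨fun j => m (R j), fun j => (R j).1, fun j => hm _, fun j => ?_, fun j => ?_⟩
  · simpa only [hR] using hnext (R j)
  · simpa only [hR] using hsmall (R j)

theorem exists_not_tendsto_zero (μ : ℕ → AddContent ℝ (univ : Set (Set ℕ)))
    (hμ : ∀ n A, |μ n A| ≤ M) (hfin : ∀ n (S : Finset ℕ), n ∈ S → μ n S = 1) :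
    ∃ A, ¬ Tendsto (fun n => μ n A) atTop (𝓝 0) := by
  obtain ⟨m, R, hmR, hRsucc, hsmall⟩ :=
    exists_seq_forall_abs_le μ hμ (by norm_num : (0 : ℝ) < 1 / 4)
  have hmono : StrictMono m := strictMono_nat_of_lt_succ fun j =>
    not_le.1 (hRsucc j (hmR (j + 1))).2
  have hRanti : Antitone R := antitone_nat_of_succ_le fun j => (hRsucc j).trans sdiff_subset
  refine ⟨range m, fun hlim => ?_⟩
  have hlarge (j : ℕ) : 3 / 4 ≤ μ (m j) (range m) := by
    have hhead : range m \ R (j + 1) ⊆ m '' Iic j := by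
      rintro _ ⟨⟨i, rfl⟩, hi⟩
      exact ⟨i, mem_Iic.2 (not_lt.1 fun hji => hi (hRanti hji (hmR i))), rfl⟩
    have hfinite : (range m \ R (j + 1)).Finite := ((finite_Iic j).image m).subset hhead
    have hmj : m j ∈ range m \ R (j + 1) :=
      ⟨mem_range_self j, fun h => (hRsucc j h).2 (mem_Iic.2 le_rfl)⟩
    have hone : μ (m j) (range m \ R (j + 1)) = 1 := by
      simpa using hfin (m j) hfinite.toFinset (hfinite.mem_toFinset.2 hmj)
    have htail := hsmall j (range m ∩ R (j + 1)) inter_subset_right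
    rw [← inter_union_sdiff (range m) (R (j + 1)),
      addContent_union isSetRing_univ trivial trivial disjoint_sdiff_inter.symm, hone]
    linarith [(abs_le.1 htail).1]
  have := ge_of_tendsto (hlim.comp hmono.tendsto_atTop) (Eventually.of_forall hlarge)
  norm_num at this

end AddContent

end MeasureTheory

namespace ZeroAtInftyContinuousMap

variable {α : Type*} [TopologicalSpace α]

theorem abs_apply_le_norm (x : C₀(α, ℝ)) (a : α) : |x a| ≤ ‖x‖ :=
  norm_toBCF_eq_norm (f := x) ▸ x.toBCF.norm_coe_le_norm a

variable [DiscreteTopology α]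

def single (a : α) : C₀(α, ℝ) where
  toFun := ({a} : Set α).indicator 1
  continuous_toFun := continuous_of_discreteTopology
  zero_at_infty' := HasCompactSupport.is_zero_at_infty <|
    .intro (finite_singleton a).isCompact fun _ hx => indicator_of_notMem hx _

theorem sum_smul_single_apply (S : Finset α) (c : α → ℝ) (b : α) :
    (∑ a ∈ S, c a • single a) b = (S : Set α).indicator c b := by
  classical
  induction S using Finset.induction_on with
  | empty => simp
  | insert a S ha ih =>
    rw [Finset.sum_insert ha, coe_add, Pi.add_apply, ih, Finset.coe_insert, coe_smul]
    by_cases hb : b = a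
    · subst hb; simp [single, ha]
    · simp [single, hb, Set.indicator_apply]

theorem norm_sum_smul_single_le (S : Finset α) {c : α → ℝ} (hc : ∀ a, |c a| ≤ 1) :
    ‖∑ a ∈ S, c a • single a‖ ≤ 1 := by
  classical
  rw [← norm_toBCF_eq_norm, BoundedContinuousFunction.norm_le zero_le_one]
  intro b
  change |(∑ a ∈ S, c a • single a) b| ≤ 1
  rw [sum_smul_single_apply, indicator_apply]
  split_ifs
  · exact hc b
  · simp

theorem sum_abs_apply_single_le (f : StrongDual ℝ C₀(α, ℝ)) (S : Finset α) :
    ∑ a ∈ S, |f (single a)| ≤ ‖f‖ := by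
  set σ : α → ℝ := fun a => SignType.sign (f (single a))
  have hσ (a : α) : |σ a| ≤ 1 := by
    rcases lt_trichotomy (f (single a)) 0 with h | h | h <;> simp [σ, h]
  calc ∑ a ∈ S, |f (single a)| = f (∑ a ∈ S, σ a • single a) := by
        simp [σ, map_sum, sign_mul_self]
    _ ≤ ‖f‖ * ‖∑ a ∈ S, σ a • single a‖ := (le_abs_self _).trans (f.le_opNorm _)
    _ ≤ ‖f‖ := mul_le_of_le_one_right (norm_nonneg f) (norm_sum_smul_single_le S hσ)

theorem summable_abs_apply_single (f : StrongDual ℝ C₀(α, ℝ)) :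
    Summable fun a => |f (single a)| :=
  summable_of_sum_le (fun _ => abs_nonneg _) (sum_abs_apply_single_le f)

theorem abs_tsum_subtype_apply_single_le (f : StrongDual ℝ C₀(α, ℝ)) (A : Set α) :
    |∑' a : A, f (single a)| ≤ ‖f‖ := by
  have hA : Summable fun a : A => |f (single a)| := (summable_abs_apply_single f).subtype A
  calc |∑' a : A, f (single a)| ≤ ∑' a : A, |f (single a)| := by
        simpa only [Real.norm_eq_abs] using
          norm_tsum_le_tsum_norm (f := fun a : A => f (single a)) hA
    _ ≤ ∑' a, |f (single a)| :=
        (summable_abs_apply_single f).tsum_subtype_le _ A fun _ => abs_nonneg _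
    _ ≤ ‖f‖ := tsum_le_of_sum_le' (norm_nonneg f) (sum_abs_apply_single_le f)

def indicatorBidual (A : Set α) : StrongDual ℝ C₀(α, ℝ) →L[ℝ] ℝ :=
  LinearMap.mkContinuous
    { toFun := fun f : StrongDual ℝ C₀(α, ℝ) => ∑' a : A, f (single a)
      map_add' := fun f g => by
        exact ((summable_abs_apply_single f).of_abs.subtype A).tsum_add
          ((summable_abs_apply_single g).of_abs.subtype A)
      map_smul' := fun c f => tsum_mul_left }
    1 fun f => by simpa using abs_tsum_subtype_apply_single_le f A

theorem indicatorBidual_apply (A : Set α) (f : StrongDual ℝ C₀(α, ℝ)) :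
    indicatorBidual A f = ∑' a : A, f (single a) := rfl

theorem indicatorBidual_union {A B : Set α} (h : Disjoint A B) :
    indicatorBidual (A ∪ B) = indicatorBidual A + indicatorBidual B := by
  ext f
  exact Summable.tsum_union_disjoint h
    ((summable_abs_apply_single f).of_abs.subtype _)
    ((summable_abs_apply_single f).of_abs.subtype _)

theorem indicatorBidual_finset (S : Finset α) (f : StrongDual ℝ C₀(α, ℝ)) :
    indicatorBidual S f = f (∑ a ∈ S, single a) := by
  rw [indicatorBidual_apply, map_sum]
  exact Finset.tsum_subtype S fun a => f (single a)

variable {Y : Type*} [NormedAddCommGroup Y] [NormedSpace ℝ Y]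
  (T : C₀(α, ℝ) ≃L[ℝ] StrongDual ℝ Y)

def indicatorProj (A : Set α) : C₀(α, ℝ) :=
  T.symm ((indicatorBidual A).comp (T : C₀(α, ℝ) →L[ℝ] StrongDual ℝ Y).flip)

theorem indicatorProj_union {A B : Set α} (h : Disjoint A B) :
    indicatorProj T (A ∪ B) = indicatorProj T A + indicatorProj T B := by
  simp only [indicatorProj, indicatorBidual_union h, ContinuousLinearMap.add_comp, map_add]

theorem indicatorProj_finset (S : Finset α) :
    indicatorProj T S = ∑ a ∈ S, single a := by
  rw [indicatorProj, ContinuousLinearEquiv.symm_apply_eq]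
  ext y
  simp [indicatorBidual_finset]

theorem norm_indicatorProj_le (A : Set α) : ‖indicatorProj T A‖ ≤
    ‖(T.symm : StrongDual ℝ Y →L[ℝ] C₀(α, ℝ))‖ * ‖(T : C₀(α, ℝ) →L[ℝ] StrongDual ℝ Y)‖ := by
  set T' := (T : C₀(α, ℝ) →L[ℝ] StrongDual ℝ Y)
  have hA : ‖(indicatorBidual A).comp T'.flip‖ ≤ ‖T'‖ :=
    ContinuousLinearMap.opNorm_le_bound _ T'.opNorm_nonneg fun y =>
      calc _ ≤ ‖T'.flip y‖ := abs_tsum_subtype_apply_single_le _ A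
        _ ≤ ‖T'‖ * ‖y‖ := T'.opNorm_flip ▸ T'.flip.le_opNorm y
  calc ‖indicatorProj T A‖
      ≤ ‖(T.symm : StrongDual ℝ Y →L[ℝ] C₀(α, ℝ))‖ * ‖(indicatorBidual A).comp T'.flip‖ :=
        (T.symm : StrongDual ℝ Y →L[ℝ] C₀(α, ℝ)).le_opNorm _
    _ ≤ _ := by gcongr

def coordContent (a : α) : AddContent ℝ (univ : Set (Set α)) :=
  isSetRing_univ.addContent_of_union (fun A => indicatorProj T A a)
    (by simpa using congr_arg (· a) (indicatorProj_finset T ∅))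
    fun _ _ h => by rw [indicatorProj_union T h]; rfl

theorem abs_coordContent_le (a : α) (A : Set α) :
    |coordContent T a A| ≤
      ‖(T.symm : StrongDual ℝ Y →L[ℝ] C₀(α, ℝ))‖ * ‖(T : C₀(α, ℝ) →L[ℝ] StrongDual ℝ Y)‖ :=
  (abs_apply_le_norm _ a).trans (norm_indicatorProj_le T A)

theorem coordContent_finset {a : α} {S : Finset α} (ha : a ∈ S) : coordContent T a S = 1 := by
  change indicatorProj T S a = 1
  simpa [indicatorProj_finset, ha] using sum_smul_single_apply S 1 a

end ZeroAtInftyContinuousMap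

end

/-- There exists a Banach space `X` over `ℝ` such that for every normed
space `Y` over `ℝ` there is no continuous linear equivalence between `X` and `Y*`.
(A witness is the space `c₀`.) -/
theorem exists_banach_not_a_dual : Nonempty BanachNotADualWitness := by
  refine ⟨{ X := C₀(ℕ, ℝ), complete := inferInstance, not_dual := fun Y _ _ => ⟨fun T => ?_⟩ }⟩
  obtain ⟨A, hA⟩ := AddContent.exists_not_tendsto_zero (ZeroAtInftyContinuousMap.coordContent T)
    (ZeroAtInftyContinuousMap.abs_coordContent_le T)
    fun _ _ => ZeroAtInftyContinuousMap.coordContent_finset T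
  rw [← Nat.cofinite_eq_atTop, ← cocompact_eq_cofinite] at hA
  exact hA (ZeroAtInftyContinuousMap.indicatorProj T A).zero_at_infty'
end

section
/- Let X be a normed space over 𝕜 whose algebraic (Hamel) dimension equals ℵ₀, i.e., Module.rank 𝕜 X = ℵ₀. Then the algebraic dimension of its continuous dual equals the continuum: Module.rank 𝕜 X* = 2^{ℵ₀}. -/
/-!
A continuous functional is determined by its values on a countable Hamel basis, so the dual has
at most `#𝕜 ^ ℵ₀ = 𝔠` elements. Conversely, Hahn–Banach applied inductively yields a
biorthogonal sequence `fₘ (eₙ) = δₘₙ` with `‖fₙ‖ ≤ 1`. For `t ∈ (0, 1)` the functional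
`gₜ = ∑ tⁿ • fₙ` converges and sends `eₙ` to `tⁿ`. Geometric sequences with distinct ratios are
eigenvectors of the shift with distinct eigenvalues, hence linearly independent, so the `gₜ` form
`𝔠` linearly independent functionals.
-/

open Cardinal

theorem Submodule.exists_notMem_forall_apply_eq_zero {K V ι : Type*} [Field K] [AddCommGroup V]
    [Module K V] [Finite ι] (hV : ¬ Module.Finite K V) (T : Submodule K V) [Module.Finite K T]
    (φ : ι → Module.Dual K V) : ∃ x ∉ T, ∀ i, φ i x = 0 := by
  by_contra! H
  have hle : LinearMap.ker (LinearMap.pi φ) ≤ T := fun x hx ↦ by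
    by_contra hxT
    obtain ⟨i, hi⟩ := H x hxT
    exact hi (congrFun (LinearMap.mem_ker.mp hx) i)
  have : Module.Finite K (V ⧸ T) := (Submodule.CoFG.ker _).of_le hle
  exact hV (.of_submodule_quotient T)

theorem linearIndependent_pow_seq (K : Type*) [Field K] :
    LinearIndependent K (fun (t : K) (n : ℕ) ↦ t ^ n) := by
  let shift : Module.End K (ℕ → K) :=
    { toFun := fun a n ↦ a (n + 1), map_add' := fun _ _ ↦ rfl, map_smul' := fun _ _ ↦ rfl }
  refine shift.eigenvectors_linearIndependent' id Function.injective_id _ fun t ↦ ⟨?_, ?_⟩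
  · rw [Module.End.mem_eigenspace_iff]
    funext n
    simp [shift, pow_succ, mul_comm]
  · intro h
    simpa using congrFun h 0

theorem RCLike.mk_le_continuum (𝕜 : Type*) [RCLike 𝕜] : #𝕜 ≤ 𝔠 := by
  have hinj : Function.Injective fun z : 𝕜 ↦ (RCLike.re z, RCLike.im z) :=
    fun z w h ↦ RCLike.ext (congrArg Prod.fst h) (congrArg Prod.snd h)
  simpa [mk_real] using lift_mk_le_lift_mk_of_injective hinj

section NormedSpace

variable {𝕜 X : Type*} [RCLike 𝕜] [NormedAddCommGroup X] [NormedSpace 𝕜 X]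

theorem Submodule.exists_strongDual_eq_one_of_notMem {S : Submodule 𝕜 X}
    (hS : IsClosed (S : Set X)) {x : X} (hx : x ∉ S) :
    ∃ φ : StrongDual 𝕜 X, (∀ y ∈ S, φ y = 0) ∧ φ x = 1 := by
  have : IsClosed (S : Set X) := hS
  obtain ⟨g, hg⟩ := SeparatingDual.exists_eq_one (R := 𝕜) (x := S.mkQ x)
    (by simpa [Submodule.Quotient.mk_eq_zero] using hx)
  refine ⟨g.comp S.mkQL, fun y hy ↦ ?_, hg⟩
  simp [(Submodule.Quotient.mk_eq_zero S).mpr hy]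

theorem exists_biorthogonal_seq (hX : ¬ FiniteDimensional 𝕜 X) :
    ∃ (e : ℕ → X) (f : ℕ → StrongDual 𝕜 X),
      (∀ n, ‖f n‖ ≤ 1) ∧ ∀ m n, f m (e n) = if m = n then 1 else 0 := by
  have step : ∀ s : Finset (X × StrongDual 𝕜 X), ∃ p : X × StrongDual 𝕜 X,
      (p.2 p.1 = 1 ∧ ‖p.2‖ ≤ 1) ∧ ∀ q ∈ s, q.2 p.1 = 0 ∧ p.2 q.1 = 0 := by
    intro s
    let T := Submodule.span 𝕜 (Prod.fst '' (s : Set (X × StrongDual 𝕜 X)))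
    have : FiniteDimensional 𝕜 T := .span_of_finite 𝕜 (s.finite_toSet.image _)
    obtain ⟨x, hxT, hx⟩ := T.exists_notMem_forall_apply_eq_zero hX
      fun q : s ↦ (q.1.2 : Module.Dual 𝕜 X)
    obtain ⟨φ, hφT, hφx⟩ := T.exists_strongDual_eq_one_of_notMem T.closed_of_finiteDimensional hxT
    have hφ : φ ≠ 0 := by rintro rfl; simp at hφx
    refine ⟨((‖φ‖ : 𝕜) • x, (‖φ‖⁻¹ : 𝕜) • φ), ⟨?_, (norm_smul_inv_norm hφ).le⟩,
      fun q hq ↦ ⟨?_, ?_⟩⟩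
    · simp [hφx, hφ]
    · simp [show q.2 x = 0 from hx ⟨q, hq⟩]
    · simp [hφT q.1 (Submodule.subset_span ⟨q, hq, rfl⟩)]
  obtain ⟨p, hp, hpp⟩ := exists_seq_of_forall_finset_exists (fun p ↦ p.2 p.1 = 1 ∧ ‖p.2‖ ≤ 1)
    (fun p q ↦ p.2 q.1 = 0 ∧ q.2 p.1 = 0) fun s _ ↦ step s
  refine ⟨fun n ↦ (p n).1, fun n ↦ (p n).2, fun n ↦ (hp n).2, fun m n ↦ ?_⟩
  rcases lt_trichotomy m n with hmn | rfl | hmn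
  · simp [hmn.ne, (hpp m n hmn).1]
  · simp [(hp m).1]
  · simp [hmn.ne', (hpp n m hmn).2]

theorem continuum_le_rank_strongDual_of_biorthogonal (e : ℕ → X) (f : ℕ → StrongDual 𝕜 X)
    (hf : ∀ n, ‖f n‖ ≤ 1) (hef : ∀ m n, f m (e n) = if m = n then 1 else 0) :
    𝔠 ≤ Module.rank 𝕜 (StrongDual 𝕜 X) := by
  let r : Set.Ioo (0 : ℝ) 1 → 𝕜 := fun t ↦ ((t : ℝ) : 𝕜)
  have hsum (t) : Summable fun n ↦ r t ^ n • f n := by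
    refine .of_norm_bounded (summable_geometric_of_lt_one t.2.1.le t.2.2) fun n ↦ ?_
    rw [norm_smul, norm_pow, RCLike.norm_ofReal, abs_of_pos t.2.1]
    exact mul_le_of_le_one_right (pow_nonneg t.2.1.le n) (hf n)
  let g : Set.Ioo (0 : ℝ) 1 → StrongDual 𝕜 X := fun t ↦ ∑' n, r t ^ n • f n
  have hg (t k) : g t (e k) = r t ^ k := by
    rw [show g t (e k) = ∑' n, (r t ^ n • f n) (e k) from
      (ContinuousLinearMap.apply 𝕜 𝕜 (e k)).map_tsum (hsum t)]
    simp [hef]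
  let Ψ : StrongDual 𝕜 X →ₗ[𝕜] ℕ → 𝕜 :=
    LinearMap.pi fun n ↦ (ContinuousLinearMap.apply 𝕜 𝕜 (e n) : StrongDual 𝕜 X →ₗ[𝕜] 𝕜)
  have hΨg : Ψ ∘ g = (fun (s : 𝕜) (n : ℕ) ↦ s ^ n) ∘ r := by
    ext t n
    exact hg t n
  have hr : Function.Injective r := fun s t hst ↦ Subtype.ext (RCLike.ofReal_injective hst)
  have hli : LinearIndependent 𝕜 g :=
    .of_comp Ψ (hΨg ▸ (linearIndependent_pow_seq 𝕜).comp r hr)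
  simpa [mk_Ioo_real zero_lt_one] using hli.cardinal_lift_le_rank

theorem rank_strongDual_le_continuum (h : Module.rank 𝕜 X ≤ ℵ₀) :
    Module.rank 𝕜 (StrongDual 𝕜 X) ≤ 𝔠 := by
  let ι := Module.Basis.ofVectorSpaceIndex 𝕜 X
  let b := Module.Basis.ofVectorSpace 𝕜 X
  have hι : #ι ≤ ℵ₀ := b.mk_eq_rank'' ▸ h
  have hinj : Function.Injective fun φ : StrongDual 𝕜 X ↦ φ ∘ b :=
    fun φ ψ hφψ ↦ ContinuousLinearMap.coe_injective (b.ext fun i ↦ congrFun hφψ i)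
  calc Module.rank 𝕜 (StrongDual 𝕜 X) ≤ #(StrongDual 𝕜 X) := rank_le_card _ _
    _ ≤ #(ι → 𝕜) := mk_le_of_injective hinj
    _ = lift #𝕜 ^ lift #ι := mk_arrow ι 𝕜
    _ ≤ 𝔠 ^ lift #ι := power_le_power_right (lift_le_continuum.mpr (RCLike.mk_le_continuum 𝕜))
    _ ≤ 𝔠 ^ ℵ₀ := power_le_power_left continuum_ne_zero (lift_le_aleph0.mpr hι)
    _ = 𝔠 := continuum_power_aleph0

end NormedSpace

/-- If a normed space `X` over `𝕜 ∈ {ℝ, ℂ}` has algebraic (Hamel) dimension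
exactly `ℵ₀`, then its continuous dual `X*` has algebraic dimension `2 ^ ℵ₀`. -/
theorem rank_dual_of_rank_aleph0 {𝕜 X : Type u} [RCLike 𝕜]
    [NormedAddCommGroup X] [NormedSpace 𝕜 X]
    (h : Module.rank 𝕜 X = ℵ₀) :
    Module.rank 𝕜 (StrongDual 𝕜 X) = 2 ^ (ℵ₀ : Cardinal.{u}) := by
  have hX : ¬ FiniteDimensional 𝕜 X := fun _ ↦ (Module.rank_lt_aleph0 𝕜 X).ne h
  obtain ⟨e, f, hf, hef⟩ := exists_biorthogonal_seq hX
  rw [two_power_aleph0]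
  exact le_antisymm (rank_strongDual_le_continuum h.le)
    (continuum_le_rank_strongDual_of_biorthogonal e f hf hef)
end

section
/- Let X be a normed space over 𝕜 with algebraic (Hamel) dimension Module.rank 𝕜 X = ℵ₀, and let Y be a nontrivial finite-dimensional normed space over 𝕜. Then the normed space L(X,Y) of continuous linear maps from X to Y satisfies both card L(X,Y) = 2^{ℵ₀} and Module.rank 𝕜 L(X,Y) = 2^{ℵ₀}. -/
/-!
A countable Hamel basis `b` determines each operator by a sequence in `Y`, so
`#L(X,Y) ≤ 𝔠 ^ ℵ₀ = 𝔠`. Conversely, Hahn–Banach gives continuous functionals `f n` with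
`f n (b n) = 1` and `f n (b k) = 0` for `k < n`; rescaled so that `∑ ‖f n‖ < ∞`, the functionals
`∑' n, t ^ n • f n`, `t ∈ (0, 1)`, are linearly independent: evaluated on the basis they become
an injective triangular transform of the geometric sequences `(t ^ n)`, which are independent as
distinct characters of `ℕ` (Dedekind). Multiplying by a fixed `y ≠ 0` in `Y` gives
`𝔠 ≤ rank L(X,Y) ≤ #L(X,Y)`.
-/

open Cardinal Finset

universe u

section Triangular

variable {R : Type*} [CommRing R]

def triangularMap (M : ℕ → ℕ → R) : (ℕ → R) →ₗ[R] (ℕ → R) :=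
  LinearMap.pi fun k => ∑ n ∈ range (k + 1), M n k • LinearMap.proj n

@[simp]
theorem triangularMap_apply (M : ℕ → ℕ → R) (a : ℕ → R) (k : ℕ) :
    triangularMap M a k = ∑ n ∈ range (k + 1), a n * M n k := by
  simp [triangularMap, mul_comm]

theorem ker_triangularMap [NoZeroDivisors R] {M : ℕ → ℕ → R} (hM : ∀ k, M k k ≠ 0) :
    LinearMap.ker (triangularMap M) = ⊥ := by
  refine LinearMap.ker_eq_bot'.2 fun a ha => funext fun k => ?_
  induction k using Nat.strong_induction_on with
  | _ k ih =>
    have hk := congrFun ha k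
    rw [triangularMap_apply, sum_range_succ,
      sum_eq_zero fun n hn => by rw [ih n (mem_range.1 hn), Pi.zero_apply, zero_mul],
      zero_add] at hk
    exact (mul_eq_zero.1 hk).resolve_right (hM k)

end Triangular

theorem linearIndependent_fun_pow {ι R : Type*} [CommRing R] [IsDomain R] {t : ι → R}
    (ht : Function.Injective t) : LinearIndependent R fun i (n : ℕ) => t i ^ n :=
  (linearIndependent_monoidHom (Multiplicative ℕ) R).comp (fun i => powersHom R (t i))
    ((powersHom R).injective.comp ht)

theorem Module.Basis.nonempty_nat_of_rank_eq_aleph0 {K V : Type u} [DivisionRing K]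
    [AddCommGroup V] [Module K V] (h : Module.rank K V = ℵ₀) : Nonempty (Module.Basis ℕ K V) :=
  have := (denumerable_iff.2 ((Module.Free.rank_eq_card_chooseBasisIndex K V).symm.trans h)).some
  ⟨(Module.Free.chooseBasis K V).reindex (Denumerable.eqv _)⟩

section Cardinality

variable {𝕜 : Type u} [RCLike 𝕜]

theorem RCLike.cardinal_mk_le_continuum : #𝕜 ≤ 𝔠 := by
  have h := lift_mk_le_lift_mk_of_injective (f := fun z : 𝕜 => (RCLike.re z, RCLike.im z))
    fun z w h => RCLike.ext (congrArg Prod.fst h) (congrArg Prod.snd h)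
  simpa [mk_real] using h

theorem cardinal_mk_le_continuum_of_finiteDimensional {Y : Type u} [AddCommGroup Y] [Module 𝕜 Y]
    [FiniteDimensional 𝕜 Y] : #Y ≤ 𝔠 := by
  rw [cardinalMk_eq_cardinalMk_field_pow_rank 𝕜 Y, ← continuum_power_aleph0]
  exact (power_le_power_right RCLike.cardinal_mk_le_continuum).trans
    (power_le_power_left continuum_ne_zero (Module.rank_lt_aleph0 𝕜 Y).le)

theorem Module.Basis.cardinal_mk_continuousLinearMap_le_continuum {X Y : Type u}
    [NormedAddCommGroup X] [NormedSpace 𝕜 X] [NormedAddCommGroup Y] [NormedSpace 𝕜 Y]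
    [FiniteDimensional 𝕜 Y] (b : Module.Basis ℕ 𝕜 X) : #(X →L[𝕜] Y) ≤ 𝔠 :=
  calc #(X →L[𝕜] Y) ≤ #(X →ₗ[𝕜] Y) := mk_le_of_injective ContinuousLinearMap.coe_injective
    _ = #Y ^ ℵ₀ := by rw [← mk_congr (b.constr 𝕜).toEquiv, mk_arrow]; simp
    _ ≤ 𝔠 ^ ℵ₀ := power_le_power_right (cardinal_mk_le_continuum_of_finiteDimensional (𝕜 := 𝕜))
    _ = 𝔠 := continuum_power_aleph0

end Cardinality

section Dual

variable {𝕜 : Type*} [RCLike 𝕜]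

theorem exists_ne_zero_summable_norm_smul {E : Type*} [SeminormedAddCommGroup E]
    [NormedSpace 𝕜 E] (v : ℕ → E) :
    ∃ c : ℕ → 𝕜, (∀ n, c n ≠ 0) ∧ Summable fun n => ‖c n • v n‖ := by
  refine ⟨fun n => (((2 : ℝ) ^ n * (‖v n‖ + 1))⁻¹ : ℝ),
    fun n => RCLike.ofReal_ne_zero.2 (by positivity), ?_⟩
  refine summable_geometric_two.of_nonneg_of_le (fun n => norm_nonneg _) fun n => ?_
  rw [norm_smul, RCLike.norm_ofReal, abs_of_pos (by positivity), inv_mul_le_iff₀ (by positivity),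
    one_div, inv_pow, mul_right_comm, mul_inv_cancel₀ (by positivity), one_mul]
  linarith

variable {X : Type*} [NormedAddCommGroup X] [NormedSpace 𝕜 X]

theorem StrongDual.exists_eqOn_of_finiteDimensional (S : Submodule 𝕜 X) [FiniteDimensional 𝕜 S]
    (f : Module.Dual 𝕜 X) : ∃ g : StrongDual 𝕜 X, ∀ x ∈ S, g x = f x := by
  obtain ⟨g, hg⟩ := StrongDual.exists_extension S (f ∘ₗ S.subtype).toContinuousLinearMap
  exact ⟨g, fun x hx => hg ⟨x, hx⟩⟩

theorem Module.Basis.exists_strongDual_triangular (b : Module.Basis ℕ 𝕜 X) :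
    ∃ f : ℕ → StrongDual 𝕜 X, (∀ n, f n (b n) = 1) ∧ ∀ n k, k < n → f n (b k) = 0 := by
  have hf (n : ℕ) :=
    have := FiniteDimensional.span_of_finite 𝕜 ((Set.finite_Iic n).image b)
    StrongDual.exists_eqOn_of_finiteDimensional (Submodule.span 𝕜 (b '' Set.Iic n)) (b.coord n)
  choose f hf using hf
  have hb {n k : ℕ} (hkn : k ≤ n) : f n (b k) = if k = n then 1 else 0 := by
    rw [hf n _ (Submodule.subset_span ⟨k, hkn, rfl⟩), b.coord_apply, b.repr_self,
      Finsupp.single_apply, eq_comm]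
  exact ⟨f, fun n => by simp [hb le_rfl], fun n k hkn => by simp [hb hkn.le, hkn.ne]⟩

theorem linearIndependent_tsum_pow_smul {ι : Type*} {f : ℕ → StrongDual 𝕜 X} {x : ℕ → X}
    (hf : Summable fun n => ‖f n‖) (hdiag : ∀ n, f n (x n) ≠ 0)
    (hzero : ∀ n k, k < n → f n (x k) = 0) {t : ι → 𝕜} (ht : Function.Injective t)
    (ht1 : ∀ i, ‖t i‖ ≤ 1) : LinearIndependent 𝕜 fun i => ∑' n, t i ^ n • f n := by
  have hsum (i : ι) : Summable fun n => t i ^ n • f n :=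
    hf.of_norm_bounded fun n => by
      rw [norm_smul, norm_pow]
      exact mul_le_of_le_one_left (norm_nonneg _) (pow_le_one₀ (norm_nonneg _) (ht1 i))
  let φ : StrongDual 𝕜 X →ₗ[𝕜] ℕ → 𝕜 :=
    LinearMap.pi fun k => (ContinuousLinearMap.apply 𝕜 𝕜 (x k)).toLinearMap
  have hφ : φ ∘ (fun i => ∑' n, t i ^ n • f n) =
      triangularMap (fun n k => f n (x k)) ∘ fun i n => t i ^ n := by
    ext i k
    have := (ContinuousLinearMap.apply 𝕜 𝕜 (x k)).map_tsum (hsum i)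
    simp only [ContinuousLinearMap.apply_apply, FunLike.coe_smul, Pi.smul_apply,
      smul_eq_mul] at this
    simp only [Function.comp_apply, triangularMap_apply, φ, LinearMap.pi_apply,
      ContinuousLinearMap.coe_coe, ContinuousLinearMap.apply_apply, this]
    exact tsum_eq_sum fun n hn => by rw [hzero n k (by simpa using hn), mul_zero]
  refine LinearIndependent.of_comp φ ?_
  rw [hφ]
  exact (linearIndependent_fun_pow ht).map' _ (ker_triangularMap hdiag)

theorem Module.Basis.continuum_le_rank_strongDual (b : Module.Basis ℕ 𝕜 X) :
    𝔠 ≤ Module.rank 𝕜 (StrongDual 𝕜 X) := by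
  obtain ⟨f, hdiag, hzero⟩ := b.exists_strongDual_triangular
  obtain ⟨c, hc, hsum⟩ := exists_ne_zero_summable_norm_smul (𝕜 := 𝕜) f
  have hli := linearIndependent_tsum_pow_smul (f := fun n => (c n • f n : StrongDual 𝕜 X))
    (x := b) hsum
    (fun n => by simp [hdiag, hc]) (fun n k hkn => by simp [hzero n k hkn])
    (t := fun s : Set.Ioo (0 : ℝ) 1 => ((s : ℝ) : 𝕜))
    (RCLike.ofReal_injective.comp Subtype.val_injective)
    fun s => by simp [abs_of_pos s.2.1, s.2.2.le]
  simpa [mk_Ioo_real] using hli.cardinal_lift_le_rank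

end Dual

theorem rank_strongDual_le_rank_continuousLinearMap {𝕜 X Y : Type u} [RCLike 𝕜]
    [NormedAddCommGroup X] [NormedSpace 𝕜 X] [NormedAddCommGroup Y] [NormedSpace 𝕜 Y]
    [Nontrivial Y] : Module.rank 𝕜 (StrongDual 𝕜 X) ≤ Module.rank 𝕜 (X →L[𝕜] Y) := by
  obtain ⟨y, hy⟩ := exists_ne (0 : Y)
  refine LinearMap.rank_le_of_injective ((ContinuousLinearMap.smulRightL 𝕜 X Y).flip y).toLinearMap
    ((injective_iff_map_eq_zero _).2 fun g hg => ?_)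
  simpa [hy] using congrArg norm hg

/-- Let `X` be a normed space over `𝕜 ∈ {ℝ, ℂ}` with algebraic (Hamel)
dimension `ℵ₀`, and let `Y` be a nontrivial finite-dimensional normed space over `𝕜`. Then the
space `L(X,Y)` of continuous linear maps satisfies `card L(X,Y) = 2 ^ ℵ₀` and
`Module.rank 𝕜 L(X,Y) = 2 ^ ℵ₀`. -/
theorem card_and_rank_CLM_of_rank_aleph0 {𝕜 X Y : Type u} [RCLike 𝕜]
    [NormedAddCommGroup X] [NormedSpace 𝕜 X]
    [NormedAddCommGroup Y] [NormedSpace 𝕜 Y] [Nontrivial Y] [FiniteDimensional 𝕜 Y]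
    (hX : Module.rank 𝕜 X = ℵ₀) :
    Cardinal.mk (X →L[𝕜] Y) = 2 ^ (ℵ₀ : Cardinal.{u}) ∧
    Module.rank 𝕜 (X →L[𝕜] Y) = 2 ^ (ℵ₀ : Cardinal.{u}) := by
  obtain ⟨b⟩ := Module.Basis.nonempty_nat_of_rank_eq_aleph0 hX
  have hcard : #(X →L[𝕜] Y) ≤ 𝔠 := b.cardinal_mk_continuousLinearMap_le_continuum
  have hrank : 𝔠 ≤ Module.rank 𝕜 (X →L[𝕜] Y) :=
    b.continuum_le_rank_strongDual.trans rank_strongDual_le_rank_continuousLinearMap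
  have hrank_le_card := rank_le_card 𝕜 (X →L[𝕜] Y)
  rw [two_power_aleph0]
  exact ⟨hcard.antisymm (hrank.trans hrank_le_card), (hrank_le_card.trans hcard).antisymm hrank⟩
end
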